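/- Let d ≥ 1, let P be a probability measure on ℝ^d × {−1, 1}, let φ : ℝ → ℝ, and assume y ↦ φ(y·⟨w, x⟩) is P-integrable for every w so that ℓ_φ(w) = ∫ φ(y·⟨w, x⟩) dP(x, y) is well defined. Suppose: (i) ℓ_φ : ℝ^d → ℝ is differentiable and L-strongly smooth, i.e., ℓ_φ(w') ≤ ℓ_φ(w) + ⟨∇ℓ_φ(w), w' − w⟩ + (L/2)‖w' − w‖² for all w, w' ∈ ℝ^d; (ii) w_* ∈ ℝ^d is nonzero and is a global minimizer of both ℓ_φ and ℓ_b; (iii) ψ : ℝ → ℝ satisfies ψ(ℓ_b(w) − ℓ_b(w_*)) ≤ ℓ_φ(w) − ℓ_φ(w_*) for all w ∈ ℝ^d; (iv) a > 0, γ > 0, and ψ(z) ≥ a·z^γ for all z ∈ [0, 1]. Then for every nonzero w ∈ ℝ^d, ℓ_b(w) − ℓ_b(w_*) ≤ (L·R²/(2a))^{1/γ} · ‖w/‖w‖ − w_*/‖w_*‖‖^{2/γ}, where R = ‖w_*‖. -/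
import Mathlib


open MeasureTheory RealInnerProductSpace

/-- The binary risk of a linear classifier `w` under a joint distribution `P`
on instances and real-valued labels. -/
noncomputable def binRisk {d : ℕ} (P : Measure (EuclideanSpace ℝ (Fin d) × ℝ))
    (w : EuclideanSpace ℝ (Fin d)) : ℝ :=
  (P {p | p.2 * ⟪w, p.1⟫ ≤ 0}).toReal

/-- The convex (surrogate) risk of a linear classifier `w` for the loss `φ`
under a joint distribution `P` on instances and real-valued labels. -/
noncomputable def convRisk {d : ℕ} (P : Measure (EuclideanSpace ℝ (Fin d) × ℝ))
    (φ : ℝ → ℝ) (w : EuclideanSpace ℝ (Fin d)) : ℝ :=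
  ∫ p, φ (p.2 * ⟪w, p.1⟫) ∂P

theorem stmt_7 (d : ℕ) (hd : 1 ≤ d)
    (P : Measure (EuclideanSpace ℝ (Fin d) × ℝ)) [IsProbabilityMeasure P]
    (hlab : P {p | p.2 = 1 ∨ p.2 = -1} = 1)
    (φ : ℝ → ℝ)
    (hint : ∀ w : EuclideanSpace ℝ (Fin d),
      Integrable (fun p : EuclideanSpace ℝ (Fin d) × ℝ => φ (p.2 * ⟪w, p.1⟫)) P)
    (L : ℝ)
    (hdiff : Differentiable ℝ (convRisk P φ))
    (hsmooth : ∀ w w' : EuclideanSpace ℝ (Fin d),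
      convRisk P φ w' ≤ convRisk P φ w + ⟪gradient (convRisk P φ) w, w' - w⟫
        + L / 2 * ‖w' - w‖ ^ 2)
    (ws : EuclideanSpace ℝ (Fin d)) (hws : ws ≠ 0)
    (hminφ : ∀ w, convRisk P φ ws ≤ convRisk P φ w)
    (hminb : ∀ w, binRisk P ws ≤ binRisk P w)
    (ψ : ℝ → ℝ)
    (hcal : ∀ w, ψ (binRisk P w - binRisk P ws) ≤ convRisk P φ w - convRisk P φ ws)
    (a γ : ℝ) (ha : 0 < a) (hγ : 0 < γ)
    (hψ : ∀ z ∈ Set.Icc (0 : ℝ) 1, a * z ^ γ ≤ ψ z)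
    (w : EuclideanSpace ℝ (Fin d)) (hw : w ≠ 0) :
    binRisk P w - binRisk P ws ≤
      (L * ‖ws‖ ^ 2 / (2 * a)) ^ (1 / γ) * ‖‖w‖⁻¹ • w - ‖ws‖⁻¹ • ws‖ ^ (2 / γ) := by
  -- notation
  set f := convRisk P φ with hf
  have hnws : (0:ℝ) < ‖ws‖ := norm_pos_iff.2 hws
  have hnw : (0:ℝ) < ‖w‖ := norm_pos_iff.2 hw
  -- gradient is zero at ws
  have hloc : IsLocalMin f ws := Filter.Eventually.of_forall hminφ
  have hgrad : gradient f ws = 0 := by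
    rw [gradient, hloc.fderiv_eq_zero, map_zero]
  have hsm : ∀ w', f w' ≤ f ws + L / 2 * ‖w' - ws‖ ^ 2 := by
    intro w'
    have := hsmooth ws w'
    rw [hgrad] at this
    simpa using this
  -- L ≥ 0
  have hL : 0 ≤ L := by
    have h1 := hsm (ws + ws)
    have h2 := hminφ (ws + ws)
    have h3 : ‖ws + ws - ws‖ ^ 2 = ‖ws‖ ^ 2 := by
      congr 1; simp
    rw [h3] at h1
    nlinarith [mul_pos hnws hnws]
  -- binary risk is scale invariant
  have hscale : ∀ (c : ℝ), 0 < c → ∀ v, binRisk P (c • v) = binRisk P v := by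
    intro c hc v
    unfold binRisk
    have hset : {p : EuclideanSpace ℝ (Fin d) × ℝ | p.2 * ⟪c • v, p.1⟫ ≤ 0}
        = {p : EuclideanSpace ℝ (Fin d) × ℝ | p.2 * ⟪v, p.1⟫ ≤ 0} := by
      ext p
      simp only [Set.mem_setOf_eq, real_inner_smul_left]
      constructor
      · intro h; nlinarith
      · intro h; nlinarith
    rw [hset]
  set u : EuclideanSpace ℝ (Fin d) := ‖w‖⁻¹ • w with hu
  set w' : EuclideanSpace ℝ (Fin d) := ‖ws‖ • u with hw'
  have hbw : binRisk P w' = binRisk P w := by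
    rw [hw', hu, hscale _ hnws, hscale _ (inv_pos.2 hnw)]
  set Δ := binRisk P w - binRisk P ws with hΔdef
  have hΔ0 : 0 ≤ Δ := sub_nonneg.2 (hminb w)
  have hb01 : ∀ v, binRisk P v ∈ Set.Icc (0:ℝ) 1 := by
    intro v
    constructor
    · exact ENNReal.toReal_nonneg
    · unfold binRisk
      have h := prob_le_one (μ := P) (s := {p : EuclideanSpace ℝ (Fin d) × ℝ | p.2 * ⟪v, p.1⟫ ≤ 0})
      simpa using ENNReal.toReal_mono ENNReal.one_ne_top h
  have hΔ1 : Δ ≤ 1 := by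
    have := (hb01 w).2
    have := (hb01 ws).1
    simp only [hΔdef]; linarith
  -- the norm identity
  set D := ‖‖w‖⁻¹ • w - ‖ws‖⁻¹ • ws‖ with hD
  have hwsu : w' - ws = ‖ws‖ • (u - ‖ws‖⁻¹ • ws) := by
    rw [smul_sub, smul_inv_smul₀ hnws.ne']
  have hnorm : ‖w' - ws‖ ^ 2 = ‖ws‖ ^ 2 * D ^ 2 := by
    rw [hwsu, norm_smul, Real.norm_eq_abs, abs_of_pos hnws, mul_pow, hD, hu]
  -- key inequality
  have hkey : a * Δ ^ γ ≤ L / 2 * (‖ws‖ ^ 2 * D ^ 2) := by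
    have h1 := hψ Δ ⟨hΔ0, hΔ1⟩
    have h2 := hcal w'
    rw [hbw] at h2
    have h3 := hsm w'
    rw [hnorm] at h3
    calc a * Δ ^ γ ≤ ψ Δ := h1
      _ ≤ f w' - f ws := h2
      _ ≤ L / 2 * (‖ws‖ ^ 2 * D ^ 2) := by linarith
  have hC : (0:ℝ) ≤ L * ‖ws‖ ^ 2 / (2 * a) := by positivity
  have hkey' : Δ ^ γ ≤ L * ‖ws‖ ^ 2 / (2 * a) * D ^ 2 := by
    rw [div_mul_eq_mul_div, le_div_iff₀ (by linarith)]
    nlinarith [hkey]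
  have hDnn : (0:ℝ) ≤ D := norm_nonneg _
  calc Δ = (Δ ^ γ) ^ (1/γ) := by
        rw [← Real.rpow_mul hΔ0, mul_one_div, div_self hγ.ne', Real.rpow_one]
      _ ≤ ((L * ‖ws‖ ^ 2 / (2 * a)) * D ^ 2) ^ (1/γ) :=
        Real.rpow_le_rpow (Real.rpow_nonneg hΔ0 γ) hkey' (by positivity)
      _ = (L * ‖ws‖ ^ 2 / (2 * a)) ^ (1/γ) * D ^ (2/γ) := by
        rw [Real.mul_rpow hC (by positivity)]
        congr 1
        rw [← Real.rpow_natCast D 2, ← Real.rpow_mul hDnn]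
        congr 1
        push_cast
        ring
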